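/- arXiv:2105.14127 — 4 statements merged into one kernel-verified Lean document; each statement's English description precedes it below -/
import Mathlib

section
/- Generalized policy improvement for entropic utility in episodic MDPs: Let π_1, …, π_n be deterministic Markov policies on a finite-horizon MDP with horizon T, with entropic utility Q-functions 𝒬^{π_i}_{h,β} satisfying the Bellman recursion 𝒬^{π_i}_{h,β}(s,a) = U_β[r(s,a,s') + 𝒬^{π_i}_{h+1,β}(s', π_i(s', h+1))] with 𝒬^{π_i}_{T+1,β} = 0. Suppose |𝒬̃^{π_i}_{h,β}(s,a) - 𝒬^{π_i}_{h,β}(s,a)| ≤ ε for all s, a, i, h. Define the GPI policy π_h(s) ∈ argmax_a max_i 𝒬̃^{π_i}_{h,β}(s,a). Then for all h ≤ T, s, a, and i: 𝒬^{π}_{h,β}(s,a) ≥ max_i 𝒬^{π_i}_{h,β}(s,a) − 2(T − h + 1)ε. -/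
open Finset

/-- The entropic utility of `f(s')` where `s' ∼ p`, for a finite distribution `p`:
`U_β[f] = (1/β) log ∑_{s'} p(s') exp(β f(s'))`. -/
noncomputable def Ubel {S : Type*} [Fintype S] (β : ℝ) (p : S → ℝ) (f : S → ℝ) : ℝ :=
  (1 / β) * Real.log (∑ s', p s' * Real.exp (β * f s'))

lemma ubel_sum_pos {S : Type*} [Fintype S] (β : ℝ) (p f : S → ℝ)
    (hp0 : ∀ s, 0 ≤ p s) (hp1 : ∑ s, p s = 1) :
    0 < ∑ s, p s * Real.exp (β * f s) := by
  have hex : ∃ s ∈ Finset.univ (α := S), 0 < p s := by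
    by_contra h
    push_neg at h
    have : ∑ s, p s = 0 :=
      Finset.sum_eq_zero fun s _ => le_antisymm (h s (mem_univ s)) (hp0 s)
    rw [this] at hp1; norm_num at hp1
  obtain ⟨s0, _, hs0⟩ := hex
  refine Finset.sum_pos' (fun s _ => mul_nonneg (hp0 s) (Real.exp_pos _).le) ?_
  exact ⟨s0, mem_univ s0, mul_pos hs0 (Real.exp_pos _)⟩

lemma Ubel_mono {S : Type*} [Fintype S] {β : ℝ} (hβ : β ≠ 0) {p f g : S → ℝ}
    (hp0 : ∀ s, 0 ≤ p s) (hp1 : ∑ s, p s = 1) (hfg : ∀ s, f s ≤ g s) :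
    Ubel β p f ≤ Ubel β p g := by
  have hf := ubel_sum_pos β p f hp0 hp1
  have hg := ubel_sum_pos β p g hp0 hp1
  unfold Ubel
  rcases lt_or_gt_of_ne hβ with hneg | hpos
  · have h1 : ∑ s, p s * Real.exp (β * g s) ≤ ∑ s, p s * Real.exp (β * f s) :=
      Finset.sum_le_sum fun s _ => mul_le_mul_of_nonneg_left
        (Real.exp_le_exp.2 (mul_le_mul_of_nonpos_left (hfg s) hneg.le)) (hp0 s)
    have hlog := Real.log_le_log hg h1
    have hb : (1 : ℝ) / β ≤ 0 := by
      apply div_nonpos_of_nonneg_of_nonpos zero_le_one hneg.le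
    exact mul_le_mul_of_nonpos_left hlog hb
  · have h1 : ∑ s, p s * Real.exp (β * f s) ≤ ∑ s, p s * Real.exp (β * g s) :=
      Finset.sum_le_sum fun s _ => mul_le_mul_of_nonneg_left
        (Real.exp_le_exp.2 (mul_le_mul_of_nonneg_left (hfg s) hpos.le)) (hp0 s)
    have hlog := Real.log_le_log hf h1
    have hb : 0 ≤ (1 : ℝ) / β := by positivity
    exact mul_le_mul_of_nonneg_left hlog hb

lemma Ubel_add_const {S : Type*} [Fintype S] {β : ℝ} (hβ : β ≠ 0) (p f : S → ℝ)
    (hp0 : ∀ s, 0 ≤ p s) (hp1 : ∑ s, p s = 1) (c : ℝ) :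
    Ubel β p (fun s => f s + c) = Ubel β p f + c := by
  unfold Ubel
  have h1 : ∑ s, p s * Real.exp (β * (f s + c))
      = (∑ s, p s * Real.exp (β * f s)) * Real.exp (β * c) := by
    rw [Finset.sum_mul]
    refine Finset.sum_congr rfl fun s _ => ?_
    rw [mul_add, Real.exp_add]; ring
  rw [h1, Real.log_mul (ubel_sum_pos β p f hp0 hp1).ne' (Real.exp_pos _).ne',
    Real.log_exp]
  field_simp

/-- **Generalized policy improvement for the entropic utility in episodic MDPs.**
Let `π 1, …, π n` be deterministic Markov policies on a finite-horizon MDP with horizon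
`T`, whose entropic Q-functions `Q i` satisfy the entropic Bellman recursion with
terminal condition `0`.  If `|Q̃ i h s a - Q i h s a| ≤ ε` for all `i, h ≤ T, s, a`, and
`πg` is the GPI policy, choosing at `(h, s)` an action maximizing `max_i Q̃ i h s ·`,
then the entropic Q-function `Qπ` of `πg` satisfies
`Qπ h s a ≥ max_i Q i h s a - 2 (T - h + 1) ε` for all `h ≤ T`. -/
theorem entropic_GPI {S A : Type*} [Fintype S] [Fintype A] (T n : ℕ)
    (β : ℝ) (hβ : β ≠ 0)
    (P : S → A → S → ℝ) (hP0 : ∀ s a s', 0 ≤ P s a s') (hP1 : ∀ s a, ∑ s', P s a s' = 1)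
    (r : S → A → S → ℝ)
    (π : Fin n → ℕ → S → A)
    (Q : Fin n → ℕ → S → A → ℝ)
    (hQ : ∀ i h, h ≤ T → ∀ s a,
      Q i h s a = Ubel β (P s a) (fun s' => r s a s' + Q i (h + 1) s' (π i (h + 1) s')))
    (hQT : ∀ i s a, Q i (T + 1) s a = 0)
    (Qt : Fin n → ℕ → S → A → ℝ) (ε : ℝ)
    (hApprox : ∀ i h, h ≤ T → ∀ s a, |Qt i h s a - Q i h s a| ≤ ε)
    (πg : ℕ → S → A)
    (hGPI : ∀ h s a i, ∃ j, Qt i h s a ≤ Qt j h s (πg h s))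
    (Qπ : ℕ → S → A → ℝ)
    (hQπ : ∀ h, h ≤ T → ∀ s a,
      Qπ h s a = Ubel β (P s a) (fun s' => r s a s' + Qπ (h + 1) s' (πg (h + 1) s')))
    (hQπT : ∀ s a, Qπ (T + 1) s a = 0) :
    ∀ h, h ≤ T → ∀ s a i, Qπ h s a ≥ Q i h s a - 2 * ((T : ℝ) - h + 1) * ε := by
  have main : ∀ k h, h + k = T + 1 → ∀ s a (i : Fin n),
      Q i h s a ≤ Qπ h s a + 2 * ((T : ℝ) - h + 1) * ε := by
    intro k
    induction k with
    | zero =>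
      intro h hk s a i
      have hh : h = T + 1 := by omega
      subst hh
      rw [hQT, hQπT]
      push_cast
      linarith
    | succ k ih =>
      intro h hk s a i
      have hhT : h ≤ T := by omega
      have hε : 0 ≤ ε := le_trans (abs_nonneg _) (hApprox i h hhT s a)
      -- inner inequality at h+1
      have inner : ∀ s', r s a s' + Q i (h + 1) s' (π i (h + 1) s')
          ≤ (r s a s' + Qπ (h + 1) s' (πg (h + 1) s')) + 2 * ((T : ℝ) - h + 1) * ε := by
        intro s'
        rcases Nat.lt_or_ge h T with hlt | hge
        · -- h + 1 ≤ T : use GPI and approximation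
          have h1T : h + 1 ≤ T := hlt
          obtain ⟨j, hj⟩ := hGPI (h + 1) s' (π i (h + 1) s') i
          have a1 := hApprox i (h + 1) h1T s' (π i (h + 1) s')
          have a2 := hApprox j (h + 1) h1T s' (πg (h + 1) s')
          have ihj := ih (h + 1) (by omega) s' (πg (h + 1) s') j
          rw [abs_le] at a1 a2
          push_cast at ihj ⊢
          linarith [a1.1, a1.2, a2.1, a2.2]
        · -- h = T : terminal condition
          have hh : h = T := le_antisymm hhT hge
          rw [hh, hQT, hQπT]
          have h2 : ((T : ℝ) - T + 1) = 1 := by ring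
          rw [h2]
          linarith
      rw [hQ i h hhT s a, hQπ h hhT s a]
      calc Ubel β (P s a) (fun s' => r s a s' + Q i (h + 1) s' (π i (h + 1) s'))
          ≤ Ubel β (P s a)
            (fun s' => (r s a s' + Qπ (h + 1) s' (πg (h + 1) s')) + 2 * ((T : ℝ) - h + 1) * ε) :=
            Ubel_mono hβ (hP0 s a) (hP1 s a) inner
        _ = Ubel β (P s a) (fun s' => r s a s' + Qπ (h + 1) s' (πg (h + 1) s'))
            + 2 * ((T : ℝ) - h + 1) * ε :=
            Ubel_add_const hβ (P s a) _ (hP0 s a) (hP1 s a) _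
  intro h hh s a i
  have := main (T + 1 - h) h (by omega) s a i
  linarith
end

section
/- Cross-task policy evaluation bound: under the same setting, let 𝒬^{jj}_h be the optimal entropic Q-function of task M_j with optimal policy π*_j, and let 𝒬^{ji}_h be the entropic Q-function of policy π*_j evaluated in task M_i. If sup_{s,a,s'} |r_i(s,a,s') − r_j(s,a,s')| ≤ δ, then sup_{s,a} |𝒬^{jj}_h(s,a) − 𝒬^{ji}_h(s,a)| ≤ (T − h + 1)δ for all h ≤ T + 1. -/
/-!
Backward induction on `h`. The entropic utility is monotone and cash invariant, hence
1-Lipschitz for the sup norm. Since `πj` is greedy, the maximum over next actions in the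
Bellman equation of `Qjj` is attained at `πj`, so at each step the two Bellman integrands differ
by at most `δ` (rewards) plus the error at step `h + 1` (continuation values), and the error
grows by at most `δ` per remaining step.
-/

open Finset

open Real

section EntropicUtility

variable {S : Type*} [Fintype S] {β : ℝ} {p : S → ℝ}

lemma sum_mul_exp_pos (hp0 : ∀ s, 0 ≤ p s) (hp : 0 < ∑ s, p s) (g : S → ℝ) :
    0 < ∑ s, p s * exp (g s) := by
  obtain ⟨s, -, hs⟩ := (Finset.sum_pos_iff_of_nonneg fun s _ => hp0 s).1 hp
  exact Finset.sum_pos' (fun s _ => mul_nonneg (hp0 s) (exp_pos _).le)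
    ⟨s, mem_univ s, mul_pos hs (exp_pos _)⟩

lemma ubel_mono (hβ : β ≠ 0) (hp0 : ∀ s, 0 ≤ p s) (hp : 0 < ∑ s, p s) {f g : S → ℝ}
    (hfg : f ≤ g) : Ubel β p f ≤ Ubel β p g := by
  unfold Ubel
  rcases hβ.lt_or_gt with hβ | hβ
  · have hsum : ∑ s, p s * exp (β * g s) ≤ ∑ s, p s * exp (β * f s) :=
      sum_le_sum fun s _ => mul_le_mul_of_nonneg_left
        (exp_le_exp.2 (mul_le_mul_of_nonpos_left (hfg s) hβ.le)) (hp0 s)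
    exact mul_le_mul_of_nonpos_left (log_le_log (sum_mul_exp_pos hp0 hp _) hsum)
      (one_div_nonpos.2 hβ.le)
  · have hsum : ∑ s, p s * exp (β * f s) ≤ ∑ s, p s * exp (β * g s) :=
      sum_le_sum fun s _ => mul_le_mul_of_nonneg_left
        (exp_le_exp.2 (mul_le_mul_of_nonneg_left (hfg s) hβ.le)) (hp0 s)
    exact mul_le_mul_of_nonneg_left (log_le_log (sum_mul_exp_pos hp0 hp _) hsum)
      (one_div_nonneg.2 hβ.le)

lemma ubel_add_const (hβ : β ≠ 0) (hp0 : ∀ s, 0 ≤ p s) (hp : 0 < ∑ s, p s) (f : S → ℝ)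
    (c : ℝ) : Ubel β p (fun s => f s + c) = Ubel β p f + c := by
  unfold Ubel
  have hfactor : ∑ s, p s * exp (β * (f s + c)) = (∑ s, p s * exp (β * f s)) * exp (β * c) := by
    rw [sum_mul]
    exact sum_congr rfl fun s _ => by rw [mul_add, exp_add, mul_assoc]
  rw [hfactor, log_mul (sum_mul_exp_pos hp0 hp _).ne' (exp_pos _).ne', log_exp]
  field_simp

lemma abs_ubel_sub_ubel_le (hβ : β ≠ 0) (hp0 : ∀ s, 0 ≤ p s) (hp : 0 < ∑ s, p s)
    {f g : S → ℝ} {c : ℝ} (hfg : ∀ s, |f s - g s| ≤ c) : |Ubel β p f - Ubel β p g| ≤ c := by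
  have hf : Ubel β p f ≤ Ubel β p g + c := by
    rw [← ubel_add_const hβ hp0 hp]
    exact ubel_mono hβ hp0 hp fun s => by linarith [(abs_le.1 (hfg s)).2]
  have hg : Ubel β p g ≤ Ubel β p f + c := by
    rw [← ubel_add_const hβ hp0 hp]
    exact ubel_mono hβ hp0 hp fun s => by linarith [(abs_le.1 (hfg s)).1]
  exact abs_sub_le_iff.2 ⟨by linarith, by linarith⟩

end EntropicUtility

/-- **Cross-task policy evaluation bound.**  Let `Qjj` be the optimal entropic
Q-function of task `M_j` (with reward `rj`), let `πj` be a greedy (hence optimal)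
policy for `Qjj`, and let `Qji` be the entropic Q-function of policy `πj` evaluated
in task `M_i` (with reward `ri`, same transition kernel).  If
`|ri s a s' - rj s a s'| ≤ δ` for all `s, a, s'`, then
`|Qjj h s a - Qji h s a| ≤ (T - h + 1) δ` for all `h ≤ T + 1`. -/
theorem entropic_cross_task_evaluation {S A : Type*} [Fintype S] [Fintype A] [Nonempty A]
    (T : ℕ) (β : ℝ) (hβ : β ≠ 0)
    (P : S → A → S → ℝ) (hP0 : ∀ s a s', 0 ≤ P s a s') (hP1 : ∀ s a, ∑ s', P s a s' = 1)
    (ri rj : S → A → S → ℝ) (δ : ℝ)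
    (hr : ∀ s a s', |ri s a s' - rj s a s'| ≤ δ)
    (πj : ℕ → S → A)
    (Qjj Qji : ℕ → S → A → ℝ)
    -- `Qjj` is the optimal entropic Q-function of task `M_j`:
    (hQjj : ∀ h, h ≤ T → ∀ s a, Qjj h s a =
      Ubel β (P s a) (fun s' => rj s a s' +
        Finset.univ.sup' Finset.univ_nonempty (fun a' => Qjj (h + 1) s' a')))
    (hQjjT : ∀ s a, Qjj (T + 1) s a = 0)
    -- `πj` is greedy with respect to `Qjj`:
    (hgreedy : ∀ h s a, Qjj h s a ≤ Qjj h s (πj h s))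
    -- `Qji` evaluates the policy `πj` in task `M_i`:
    (hQji : ∀ h, h ≤ T → ∀ s a, Qji h s a =
      Ubel β (P s a) (fun s' => ri s a s' + Qji (h + 1) s' (πj (h + 1) s')))
    (hQjiT : ∀ s a, Qji (T + 1) s a = 0) :
    ∀ h, h ≤ T + 1 → ∀ s a, |Qjj h s a - Qji h s a| ≤ ((T : ℝ) - h + 1) * δ := by
  have hsup : ∀ h s, univ.sup' univ_nonempty (fun a => Qjj h s a) = Qjj h s (πj h s) :=
    fun h s => le_antisymm (sup'_le _ _ fun a _ => hgreedy h s a) (le_sup' _ (mem_univ _))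
  intro h hh
  induction hh using Nat.decreasingInduction with
  | self => simp [hQjjT, hQjiT]
  | of_succ h hlt ih =>
    intro s a
    rw [hQjj h (by omega), hQji h (by omega)]
    refine abs_ubel_sub_ubel_le hβ (hP0 s a) (by simp [hP1]) fun s' => ?_
    rw [hsup]
    have hreward := abs_sub_comm (ri s a s') (rj s a s') ▸ hr s a s'
    have hnext := ih s' (πj (h + 1) s')
    push_cast at hnext
    calc _ ≤ |rj s a s' - ri s a s'| +
          |Qjj (h + 1) s' (πj (h + 1) s') - Qji (h + 1) s' (πj (h + 1) s')| := by
          rw [add_sub_add_comm]; exact abs_add_le _ _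
      _ ≤ ((T : ℝ) - h + 1) * δ := by linarith
end

section
/- Combined GPI suboptimality bound: if source policies π*_1,…,π*_n are entropic-optimal for tasks M_1,…,M_n, their utilities in target task M are approximated within ε, and δ_r = min_i sup_{s,a,s'} |r(s,a,s') − r_i(s,a,s')|, then the GPI policy π satisfies |𝒬^π_{h,β}(s,a) − 𝒬*_{h,β}(s,a)| ≤ 2(T − h + 1)(δ_r + ε) for all h ≤ T, where 𝒬* is the optimal entropic Q-function of M. -/
open Finset

private lemma downInd (T : ℕ) (Pr : ℕ → Prop) (base : Pr (T + 1))
    (step : ∀ h, h ≤ T → Pr (h + 1) → Pr h) : ∀ h, h ≤ T + 1 → Pr h := by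
  have key : ∀ d h, h + d = T + 1 → Pr h := by
    intro d
    induction d with
    | zero =>
      intro h hh
      have : h = T + 1 := by omega
      exact this ▸ base
    | succ d ih =>
      intro h hh
      exact step h (by omega) (ih (h + 1) (by omega))
  intro h hh
  exact key (T + 1 - h) h (by omega)

private lemma sum_exp_pos {S : Type*} [Fintype S] {β : ℝ} {p : S → ℝ}
    (hp0 : ∀ s, 0 ≤ p s) (hp1 : ∑ s, p s = 1) (u : S → ℝ) :
    0 < ∑ s, p s * Real.exp (β * u s) := by
  obtain ⟨s0, hs0⟩ : ∃ s0, 0 < p s0 := by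
    by_contra hc
    push_neg at hc
    have h0 : ∑ s, p s = 0 :=
      Finset.sum_eq_zero (fun s _ => le_antisymm (hc s) (hp0 s))
    rw [h0] at hp1; norm_num at hp1
  exact Finset.sum_pos' (fun s _ => mul_nonneg (hp0 s) (Real.exp_pos _).le)
    ⟨s0, Finset.mem_univ _, mul_pos hs0 (Real.exp_pos _)⟩

private lemma ubel_shift {S : Type*} [Fintype S] {β : ℝ} (hβ : β ≠ 0) {p : S → ℝ}
    (hp0 : ∀ s, 0 ≤ p s) (hp1 : ∑ s, p s = 1) {f g : S → ℝ} {c : ℝ}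
    (hfg : ∀ s, f s ≤ g s + c) : Ubel β p f ≤ Ubel β p g + c := by
  have hf := sum_exp_pos (β := β) hp0 hp1 f
  have hg := sum_exp_pos (β := β) hp0 hp1 g
  unfold Ubel
  rcases hβ.lt_or_gt with hb | hb
  · -- β < 0
    have key : Real.exp (β * c) * ∑ s, p s * Real.exp (β * g s)
        ≤ ∑ s, p s * Real.exp (β * f s) := by
      rw [Finset.mul_sum]
      refine Finset.sum_le_sum (fun s _ => ?_)
      have h1 : β * (g s + c) ≤ β * f s := by nlinarith [hfg s]
      have h2 : Real.exp (β * (g s + c)) ≤ Real.exp (β * f s) := Real.exp_le_exp.2 h1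
      calc Real.exp (β * c) * (p s * Real.exp (β * g s))
          = p s * Real.exp (β * (g s + c)) := by rw [mul_add, Real.exp_add]; ring
        _ ≤ p s * Real.exp (β * f s) := mul_le_mul_of_nonneg_left h2 (hp0 s)
    have hlog : β * c + Real.log (∑ s, p s * Real.exp (β * g s))
        ≤ Real.log (∑ s, p s * Real.exp (β * f s)) := by
      have := Real.log_le_log (mul_pos (Real.exp_pos _) hg) key
      rwa [Real.log_mul (Real.exp_ne_zero _) (ne_of_gt hg), Real.log_exp] at this
    have hmul := mul_le_mul_of_nonpos_left hlog (le_of_lt (one_div_neg.2 hb))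
    have he : (1 / β) * (β * c + Real.log (∑ s, p s * Real.exp (β * g s)))
        = (1 / β) * Real.log (∑ s, p s * Real.exp (β * g s)) + c := by
      field_simp
      ring
    linarith
  · -- 0 < β
    have key : ∑ s, p s * Real.exp (β * f s)
        ≤ Real.exp (β * c) * ∑ s, p s * Real.exp (β * g s) := by
      rw [Finset.mul_sum]
      refine Finset.sum_le_sum (fun s _ => ?_)
      have h1 : β * f s ≤ β * (g s + c) := by nlinarith [hfg s]
      have h2 : Real.exp (β * f s) ≤ Real.exp (β * (g s + c)) := Real.exp_le_exp.2 h1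
      calc p s * Real.exp (β * f s)
          ≤ p s * Real.exp (β * (g s + c)) := mul_le_mul_of_nonneg_left h2 (hp0 s)
        _ = Real.exp (β * c) * (p s * Real.exp (β * g s)) := by
            rw [mul_add, Real.exp_add]; ring
    have hlog : Real.log (∑ s, p s * Real.exp (β * f s))
        ≤ β * c + Real.log (∑ s, p s * Real.exp (β * g s)) := by
      have := Real.log_le_log hf key
      rwa [Real.log_mul (Real.exp_ne_zero _) (ne_of_gt hg), Real.log_exp] at this
    have hmul := mul_le_mul_of_nonneg_left hlog (le_of_lt (one_div_pos.2 hb))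
    have he : (1 / β) * (β * c + Real.log (∑ s, p s * Real.exp (β * g s)))
        = (1 / β) * Real.log (∑ s, p s * Real.exp (β * g s)) + c := by
      field_simp
      ring
    linarith

private lemma ubel_abs {S : Type*} [Fintype S] {β : ℝ} (hβ : β ≠ 0) {p : S → ℝ}
    (hp0 : ∀ s, 0 ≤ p s) (hp1 : ∑ s, p s = 1) {f g : S → ℝ} {c : ℝ}
    (hfg : ∀ s, |f s - g s| ≤ c) : |Ubel β p f - Ubel β p g| ≤ c := by
  rw [abs_sub_le_iff]
  constructor
  · have := ubel_shift hβ hp0 hp1 (f := f) (g := g) (c := c)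
      (fun s => by linarith [(abs_le.1 (hfg s)).2])
    linarith
  · have := ubel_shift hβ hp0 hp1 (f := g) (g := f) (c := c)
      (fun s => by linarith [(abs_le.1 (hfg s)).1])
    linarith

private lemma sup'_abs {A : Type*} [Fintype A] [Nonempty A] {f g : A → ℝ} {c : ℝ}
    (hfg : ∀ a, |f a - g a| ≤ c) :
    |Finset.univ.sup' Finset.univ_nonempty f - Finset.univ.sup' Finset.univ_nonempty g| ≤ c := by
  rw [abs_sub_le_iff]
  constructor
  · rw [sub_le_iff_le_add]
    refine Finset.sup'_le _ _ (fun a _ => ?_)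
    have h1 := (abs_le.1 (hfg a)).2
    have h2 : g a ≤ Finset.univ.sup' Finset.univ_nonempty g :=
      Finset.le_sup' _ (Finset.mem_univ a)
    linarith
  · rw [sub_le_iff_le_add]
    refine Finset.sup'_le _ _ (fun a _ => ?_)
    have h1 := (abs_le.1 (hfg a)).1
    have h2 : f a ≤ Finset.univ.sup' Finset.univ_nonempty f :=
      Finset.le_sup' _ (Finset.mem_univ a)
    linarith

/-- **Combined GPI suboptimality bound.**  Source policies `π i` are entropic-optimal
(greedy for the optimal entropic Q-functions `Qopt i`) in source tasks with rewards
`rsrc i`; `Qev i` evaluates `π i` in the target task with reward `r`; the approximations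
`Qt i` are within `ε` of `Qev i`; `πg` is the GPI policy for `Qt`; `Qπ` evaluates `πg`
in the target task; `Qstar` is the optimal entropic Q-function of the target task; and
`δr` bounds `min_i sup_{s,a,s'} |r - rsrc i|`.  Then
`|Qπ h s a - Qstar h s a| ≤ 2 (T - h + 1)(δr + ε)` for all `h ≤ T`. -/
theorem entropic_GPI_suboptimality {S A : Type*} [Fintype S] [Fintype A] [Nonempty A]
    (T n : ℕ) (β : ℝ) (hβ : β ≠ 0)
    (P : S → A → S → ℝ) (hP0 : ∀ s a s', 0 ≤ P s a s') (hP1 : ∀ s a, ∑ s', P s a s' = 1)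
    (r : S → A → S → ℝ) (rsrc : Fin n → S → A → S → ℝ)
    (π : Fin n → ℕ → S → A)
    (Qopt : Fin n → ℕ → S → A → ℝ)
    -- `Qopt i` is the optimal entropic Q-function of source task `i`:
    (hQopt : ∀ i h, h ≤ T → ∀ s a, Qopt i h s a =
      Ubel β (P s a) (fun s' => rsrc i s a s' +
        Finset.univ.sup' Finset.univ_nonempty (fun a' => Qopt i (h + 1) s' a')))
    (hQoptT : ∀ i s a, Qopt i (T + 1) s a = 0)
    -- `π i` is greedy with respect to `Qopt i`, hence optimal for source task `i`:
    (hgreedy : ∀ i h s a, Qopt i h s a ≤ Qopt i h s (π i h s))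
    -- `Qev i` evaluates `π i` in the target task:
    (Qev : Fin n → ℕ → S → A → ℝ)
    (hQev : ∀ i h, h ≤ T → ∀ s a, Qev i h s a =
      Ubel β (P s a) (fun s' => r s a s' + Qev i (h + 1) s' (π i (h + 1) s')))
    (hQevT : ∀ i s a, Qev i (T + 1) s a = 0)
    -- approximate evaluations within `ε`:
    (Qt : Fin n → ℕ → S → A → ℝ) (ε : ℝ)
    (hApprox : ∀ i h, h ≤ T → ∀ s a, |Qt i h s a - Qev i h s a| ≤ ε)
    -- `πg` is the GPI policy derived from `Qt`:
    (πg : ℕ → S → A)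
    (hGPI : ∀ h s a i, ∃ j, Qt i h s a ≤ Qt j h s (πg h s))
    -- `Qπ` evaluates `πg` in the target task:
    (Qπ : ℕ → S → A → ℝ)
    (hQπ : ∀ h, h ≤ T → ∀ s a, Qπ h s a =
      Ubel β (P s a) (fun s' => r s a s' + Qπ (h + 1) s' (πg (h + 1) s')))
    (hQπT : ∀ s a, Qπ (T + 1) s a = 0)
    -- `Qstar` is the optimal entropic Q-function of the target task:
    (Qstar : ℕ → S → A → ℝ)
    (hQstar : ∀ h, h ≤ T → ∀ s a, Qstar h s a =
      Ubel β (P s a) (fun s' => r s a s' +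
        Finset.univ.sup' Finset.univ_nonempty (fun a' => Qstar (h + 1) s' a')))
    (hQstarT : ∀ s a, Qstar (T + 1) s a = 0)
    -- `δr` bounds the reward distance to the closest source task:
    (δr : ℝ) (hδ : ∃ i, ∀ s a s', |r s a s' - rsrc i s a s'| ≤ δr) :
    ∀ h, h ≤ T → ∀ s a,
      |Qπ h s a - Qstar h s a| ≤ 2 * ((T : ℝ) - h + 1) * (δr + ε) := by
  intro h hT s a
  obtain ⟨i0, hi0⟩ := hδ
  have hδ0 : 0 ≤ δr := le_trans (abs_nonneg _) (hi0 s a s)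
  have hε0 : 0 ≤ ε := le_trans (abs_nonneg _) (hApprox i0 0 (Nat.zero_le T) s a)
  -- greedy policy attains the sup of Qopt
  have hsup : ∀ i h' s',
      Finset.univ.sup' Finset.univ_nonempty (fun a' => Qopt i h' s' a')
        = Qopt i h' s' (π i h' s') := by
    intro i h' s'
    exact le_antisymm (Finset.sup'_le _ _ (fun a' _ => hgreedy i h' s' a'))
      (Finset.le_sup' _ (Finset.mem_univ _))
  -- Step A: evaluation of π i0 in target vs source optimal Q
  have F2 : ∀ h', h' ≤ T + 1 → ∀ s a,
      |Qev i0 h' s a - Qopt i0 h' s a| ≤ ((T : ℝ) - h' + 1) * δr := by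
    refine downInd T _ ?_ ?_
    · intro s a
      rw [hQevT, hQoptT]
      have : ((T : ℝ) - (↑(T + 1) : ℕ) + 1) * δr = 0 := by push_cast; ring
      rw [this]; simp
    · intro h' hh ih s a
      rw [hQev i0 h' hh, hQopt i0 h' hh]
      refine ubel_abs hβ (hP0 s a) (hP1 s a) (fun s' => ?_)
      rw [hsup]
      have h1 := hi0 s a s'
      have h2 := ih s' (π i0 (h' + 1) s')
      have hc : ((T : ℝ) - (↑(h' + 1) : ℕ) + 1) = (T : ℝ) - h' := by push_cast; ring
      rw [hc] at h2
      have habs1 := abs_le.1 h1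
      have habs2 := abs_le.1 h2
      rw [abs_le]
      constructor <;> nlinarith [habs1.1, habs1.2, habs2.1, habs2.2]
  -- Step B: optimal Q of target vs optimal Q of source i0
  have F3 : ∀ h', h' ≤ T + 1 → ∀ s a,
      |Qstar h' s a - Qopt i0 h' s a| ≤ ((T : ℝ) - h' + 1) * δr := by
    refine downInd T _ ?_ ?_
    · intro s a
      rw [hQstarT, hQoptT]
      have : ((T : ℝ) - (↑(T + 1) : ℕ) + 1) * δr = 0 := by push_cast; ring
      rw [this]; simp
    · intro h' hh ih s a
      rw [hQstar h' hh, hQopt i0 h' hh]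
      refine ubel_abs hβ (hP0 s a) (hP1 s a) (fun s' => ?_)
      have h1 := hi0 s a s'
      have h2 : |Finset.univ.sup' Finset.univ_nonempty (fun a' => Qstar (h' + 1) s' a')
          - Finset.univ.sup' Finset.univ_nonempty (fun a' => Qopt i0 (h' + 1) s' a')|
          ≤ ((T : ℝ) - h') * δr := by
        refine sup'_abs (fun a' => ?_)
        have h2 := ih s' a'
        have hc : ((T : ℝ) - (↑(h' + 1) : ℕ) + 1) = (T : ℝ) - h' := by push_cast; ring
        rw [hc] at h2
        exact h2
      have habs1 := abs_le.1 h1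
      have habs2 := abs_le.1 h2
      rw [abs_le]
      constructor <;> nlinarith [habs1.1, habs1.2, habs2.1, habs2.2]
  -- GPI theorem: Qπ dominates each Qev up to accumulated 2ε per step
  have F4 : ∀ h', h' ≤ T + 1 → ∀ s a, ∀ i : Fin n,
      Qev i h' s a ≤ Qπ h' s a + 2 * ((T : ℝ) - h' + 1) * ε := by
    refine downInd T _ ?_ ?_
    · intro s a i
      rw [hQevT, hQπT]
      have : 2 * ((T : ℝ) - (↑(T + 1) : ℕ) + 1) * ε = 0 := by push_cast; ring
      rw [this]; simp
    · intro h' hh ih s a i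
      rw [hQev i h' hh, hQπ h' hh]
      refine ubel_shift hβ (hP0 s a) (hP1 s a) (fun s' => ?_)
      by_cases hcT : h' + 1 ≤ T
      · have e1 := (abs_le.1 (hApprox i (h' + 1) hcT s' (π i (h' + 1) s'))).1
        obtain ⟨j, hj⟩ := hGPI (h' + 1) s' (π i (h' + 1) s') i
        have e2 := (abs_le.1 (hApprox j (h' + 1) hcT s' (πg (h' + 1) s'))).2
        have e3 := ih s' (πg (h' + 1) s') j
        have hc : 2 * ((T : ℝ) - (↑(h' + 1) : ℕ) + 1) * ε = 2 * ((T : ℝ) - h') * ε := by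
          push_cast; ring
        rw [hc] at e3
        have hexp : 2 * ((T : ℝ) - h' + 1) * ε = 2 * ((T : ℝ) - h') * ε + 2 * ε := by ring
        linarith
      · have hhe : h' = T := by omega
        have hT1 : h' + 1 = T + 1 := by omega
        rw [hT1, hQevT, hQπT]
        have hcr : (h' : ℝ) = T := by exact_mod_cast hhe
        have hc2 : 0 ≤ 2 * ((T : ℝ) - h' + 1) * ε := by
          rw [hcr]
          nlinarith
        linarith
  -- any policy evaluation is below the optimal Q
  have F5 : ∀ h', h' ≤ T + 1 → ∀ s a, Qπ h' s a ≤ Qstar h' s a := by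
    refine downInd T _ ?_ ?_
    · intro s a
      rw [hQπT, hQstarT]
    · intro h' hh ih s a
      rw [hQπ h' hh, hQstar h' hh]
      have := ubel_shift hβ (hP0 s a) (hP1 s a) (c := 0)
        (f := fun s' => r s a s' + Qπ (h' + 1) s' (πg (h' + 1) s'))
        (g := fun s' => r s a s' +
          Finset.univ.sup' Finset.univ_nonempty (fun a' => Qstar (h' + 1) s' a'))
        (fun s' => by
          have h1 := ih s' (πg (h' + 1) s')
          have h2 : Qstar (h' + 1) s' (πg (h' + 1) s')
              ≤ Finset.univ.sup' Finset.univ_nonempty (fun a' => Qstar (h' + 1) s' a') :=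
            Finset.le_sup' _ (Finset.mem_univ _)
          simp only [add_zero]
          linarith)
      linarith
  -- combine
  have hT' : h ≤ T + 1 := le_trans hT (Nat.le_succ T)
  have b2 := abs_le.1 (F2 h hT' s a)
  have b3 := abs_le.1 (F3 h hT' s a)
  have b4 := F4 h hT' s a i0
  have b5 := F5 h hT' s a
  have hhT : (h : ℝ) ≤ T := by exact_mod_cast hT
  rw [abs_sub_le_iff]
  constructor
  · have : 0 ≤ 2 * ((T : ℝ) - h + 1) * (δr + ε) := by nlinarith
    linarith
  · have hsplit : 2 * ((T : ℝ) - h + 1) * (δr + ε)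
        = ((T : ℝ) - h + 1) * δr + ((T : ℝ) - h + 1) * δr + 2 * ((T : ℝ) - h + 1) * ε := by
      ring
    linarith [b2.1, b2.2, b3.1, b3.2]
end

section
/- Covariance Bellman equation: in a finite-horizon MDP with feature map φ, the covariance matrix Σ^π_h(s,a) = Cov[Ψ^π_h(s,a)] of the feature return satisfies Σ^π_h(s,a) = E_{s'~P(·|s,a)}[δ_h δ_hᵀ + Σ^π_{h+1}(s', π_{h+1}(s'))], where δ_h = φ(s,π_h(s),s') + ψ^π_{h+1}(s', π_{h+1}(s')) − ψ^π_h(s,a) is the Bellman residual of the successor features. -/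
open Finset

noncomputable section

/-- Probability of observing the state sequence `τ 0, τ 1, …` over the next `m`
transitions, starting at time `h` in state `s` with action `a`, with subsequent
actions chosen by the deterministic Markov policy `π`. -/
def pathProb {S A : Type*} (P : S → A → S → ℝ) (π : ℕ → S → A) :
    (m : ℕ) → (h : ℕ) → S → A → (Fin m → S) → ℝ
  | 0, _, _, _, _ => 1
  | m + 1, h, s, a, τ =>
      P s a (τ 0) * pathProb P π m (h + 1) (τ 0) (π (h + 1) (τ 0)) (fun i => τ i.succ)

/-- The cumulative feature vector `Σ_t φ(s_t, a_t, s_{t+1})` along the state sequence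
`τ` of length `m`, starting at time `h` in `(s, a)` and following policy `π`. -/
def featSum {S A : Type*} {d : ℕ} (φ : S → A → S → Fin d → ℝ) (π : ℕ → S → A) :
    (m : ℕ) → (h : ℕ) → S → A → (Fin m → S) → (Fin d → ℝ)
  | 0, _, _, _, _ => 0
  | m + 1, h, s, a, τ =>
      φ s a (τ 0) + featSum φ π m (h + 1) (τ 0) (π (h + 1) (τ 0)) (fun i => τ i.succ)

/-- The successor features `ψ^π_h(s,a) = E[Ψ^π_h(s,a)]`: the expected cumulative
feature vector over the next `m` transitions. -/
def sf {S A : Type*} [Fintype S] {d : ℕ} (P : S → A → S → ℝ)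
    (φ : S → A → S → Fin d → ℝ) (π : ℕ → S → A) (m h : ℕ) (s : S) (a : A) :
    Fin d → ℝ :=
  ∑ τ : Fin m → S, pathProb P π m h s a τ • featSum φ π m h s a τ

/-- The second-moment matrix of the feature return `Ψ^π_h(s,a)` centered at `c`;
taking `c = ψ^π_h(s,a)` gives the covariance matrix `Σ^π_h(s,a)`. -/
def sfCov {S A : Type*} [Fintype S] {d : ℕ} (P : S → A → S → ℝ)
    (φ : S → A → S → Fin d → ℝ) (π : ℕ → S → A) (m h : ℕ) (s : S) (a : A)
    (c : Fin d → ℝ) : Fin d → Fin d → ℝ :=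
  fun i j => ∑ τ : Fin m → S, pathProb P π m h s a τ *
    ((featSum φ π m h s a τ i - c i) * (featSum φ π m h s a τ j - c j))

lemma sum_cons_decomp {S : Type*} [Fintype S] {m : ℕ} (f : (Fin (m+1) → S) → ℝ) :
    ∑ τ : Fin (m+1) → S, f τ = ∑ s' : S, ∑ t : Fin m → S, f (Fin.cons s' t) := by
  rw [← (Fintype.sum_equiv (Fin.consEquiv fun _ => S) (fun p => f (Fin.cons p.1 p.2)) f
      (fun p => rfl)), Fintype.sum_prod_type]

lemma pathProb_sum_one {S A : Type*} [Fintype S] (P : S → A → S → ℝ) (π : ℕ → S → A)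
    (hP1 : ∀ s a, ∑ s', P s a s' = 1) :
    ∀ (m h : ℕ) (s : S) (a : A), ∑ τ : Fin m → S, pathProb P π m h s a τ = 1
  | 0, h, s, a => by simp [pathProb]
  | m + 1, h, s, a => by
    rw [sum_cons_decomp]
    simp only [pathProb, Fin.cons_zero, Fin.cons_succ]
    simp_rw [← Finset.mul_sum]
    have h2 : ∀ x : S,
        (∑ t : Fin m → S, pathProb P π m (h+1) x (π (h+1) x) t) = 1 :=
      fun x => pathProb_sum_one P π hP1 m (h+1) x _
    simp_rw [h2, mul_one]
    exact hP1 s a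

lemma sf_apply {S A : Type*} [Fintype S] {d : ℕ} (P : S → A → S → ℝ)
    (φ : S → A → S → Fin d → ℝ) (π : ℕ → S → A) (m h : ℕ) (s : S) (a : A) (k : Fin d) :
    sf P φ π m h s a k = ∑ τ : Fin m → S, pathProb P π m h s a τ * featSum φ π m h s a τ k := by
  simp [sf]
lemma covariance_bellman_key {S A : Type*} [Fintype S] {d : ℕ}
    (P : S → A → S → ℝ) (hP1 : ∀ s a, ∑ s', P s a s' = 1)
    (φ : S → A → S → Fin d → ℝ) (π : ℕ → S → A)
    (m h : ℕ) (s : S) (a : A) (i j : Fin d) :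
    sfCov P φ π (m + 1) h s a (sf P φ π (m + 1) h s a) i j =
      ∑ s', P s a s' *
        ((φ s a s' i + sf P φ π m (h + 1) s' (π (h + 1) s') i - sf P φ π (m + 1) h s a i) *
         (φ s a s' j + sf P φ π m (h + 1) s' (π (h + 1) s') j - sf P φ π (m + 1) h s a j)
         + sfCov P φ π m (h + 1) s' (π (h + 1) s')
             (sf P φ π m (h + 1) s' (π (h + 1) s')) i j) := by
  rw [sfCov, sum_cons_decomp]
  refine Finset.sum_congr rfl fun s' _ => ?_
  simp only [pathProb, featSum, Fin.cons_zero, Fin.cons_succ, Pi.add_apply]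
  set a' := π (h + 1) s' with ha'
  set ψi := sf P φ π m (h + 1) s' a' i with hψi
  set ψj := sf P φ π m (h + 1) s' a' j with hψj
  set ci := sf P φ π (m + 1) h s a i with hci
  set cj := sf P φ π (m + 1) h s a j with hcj
  have h0 : ∑ t : Fin m → S, pathProb P π m (h + 1) s' a' t = 1 :=
    pathProb_sum_one P π hP1 m (h + 1) s' a'
  have hi : ∑ t : Fin m → S,
      pathProb P π m (h + 1) s' a' t * featSum φ π m (h + 1) s' a' t i = ψi :=
    (sf_apply P φ π m (h + 1) s' a' i).symm
  have hj : ∑ t : Fin m → S,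
      pathProb P π m (h + 1) s' a' t * featSum φ π m (h + 1) s' a' t j = ψj :=
    (sf_apply P φ π m (h + 1) s' a' j).symm
  have inner :
      ∑ t : Fin m → S, pathProb P π m (h + 1) s' a' t *
        ((φ s a s' i + featSum φ π m (h + 1) s' a' t i - ci) *
         (φ s a s' j + featSum φ π m (h + 1) s' a' t j - cj)) =
      (φ s a s' i + ψi - ci) * (φ s a s' j + ψj - cj) +
        ∑ t : Fin m → S, pathProb P π m (h + 1) s' a' t *
          ((featSum φ π m (h + 1) s' a' t i - ψi) *
           (featSum φ π m (h + 1) s' a' t j - ψj)) := by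
    have hsub : ∑ t : Fin m → S, (pathProb P π m (h + 1) s' a' t *
        ((φ s a s' i + featSum φ π m (h + 1) s' a' t i - ci) *
         (φ s a s' j + featSum φ π m (h + 1) s' a' t j - cj)) -
        pathProb P π m (h + 1) s' a' t *
          ((featSum φ π m (h + 1) s' a' t i - ψi) *
           (featSum φ π m (h + 1) s' a' t j - ψj))) =
        (φ s a s' i + ψi - ci) * (φ s a s' j + ψj - cj) := by
      have e : ∀ t : Fin m → S, pathProb P π m (h + 1) s' a' t *
          ((φ s a s' i + featSum φ π m (h + 1) s' a' t i - ci) *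
           (φ s a s' j + featSum φ π m (h + 1) s' a' t j - cj)) -
          pathProb P π m (h + 1) s' a' t *
            ((featSum φ π m (h + 1) s' a' t i - ψi) *
             (featSum φ π m (h + 1) s' a' t j - ψj)) =
          (φ s a s' j - cj + ψj) *
            (pathProb P π m (h + 1) s' a' t * featSum φ π m (h + 1) s' a' t i) +
          (φ s a s' i - ci + ψi) *
            (pathProb P π m (h + 1) s' a' t * featSum φ π m (h + 1) s' a' t j) +
          ((φ s a s' i - ci) * (φ s a s' j - cj) - ψi * ψj) *
            pathProb P π m (h + 1) s' a' t := fun t => by ring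
      simp_rw [e]
      rw [Finset.sum_add_distrib, Finset.sum_add_distrib, ← Finset.mul_sum,
        ← Finset.mul_sum, ← Finset.mul_sum, h0, hi, hj]
      ring
    rw [Finset.sum_sub_distrib] at hsub
    linarith [hsub]
  calc ∑ t : Fin m → S, P s a s' * pathProb P π m (h + 1) s' a' t *
        ((φ s a s' i + featSum φ π m (h + 1) s' a' t i - ci) *
         (φ s a s' j + featSum φ π m (h + 1) s' a' t j - cj))
      = P s a s' * ∑ t : Fin m → S, pathProb P π m (h + 1) s' a' t *
        ((φ s a s' i + featSum φ π m (h + 1) s' a' t i - ci) *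
         (φ s a s' j + featSum φ π m (h + 1) s' a' t j - cj)) := by
        rw [Finset.mul_sum]; exact Finset.sum_congr rfl fun t _ => by ring
    _ = _ := by rw [inner, sfCov]

/-- **Covariance Bellman equation.**  In a finite-horizon MDP with feature map `φ`, the
covariance matrix `Σ^π_h(s,a)` of the feature return satisfies
`Σ^π_h(s,a) = E_{s' ∼ P(·|s,a)}[δ_h δ_hᵀ + Σ^π_{h+1}(s', π_{h+1}(s'))]`, where
`δ_h = φ(s, a, s') + ψ^π_{h+1}(s', π_{h+1}(s')) − ψ^π_h(s,a)` is the Bellman residual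
of the successor features. -/
theorem covariance_bellman {S A : Type*} [Fintype S] {d : ℕ} (T : ℕ)
    (P : S → A → S → ℝ) (hP0 : ∀ s a s', 0 ≤ P s a s') (hP1 : ∀ s a, ∑ s', P s a s' = 1)
    (φ : S → A → S → Fin d → ℝ) (π : ℕ → S → A)
    (h : ℕ) (hh : h ≤ T) (s : S) (a : A) :
    ∀ i j,
      sfCov P φ π (T + 1 - h) h s a (sf P φ π (T + 1 - h) h s a) i j =
        ∑ s', P s a s' *
          ((φ s a s' i + sf P φ π (T - h) (h + 1) s' (π (h + 1) s') i
              - sf P φ π (T + 1 - h) h s a i) *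
           (φ s a s' j + sf P φ π (T - h) (h + 1) s' (π (h + 1) s') j
              - sf P φ π (T + 1 - h) h s a j)
           + sfCov P φ π (T - h) (h + 1) s' (π (h + 1) s')
               (sf P φ π (T - h) (h + 1) s' (π (h + 1) s')) i j) := by
  have hm : T + 1 - h = (T - h) + 1 := by omega
  intro i j
  rw [hm]
  exact covariance_bellman_key P hP1 φ π (T - h) h s a i j

end
end
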